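/- Let M be a matroid, let S, T be disjoint subsets of E(M), let k := κ_M(S,T), and let F ⊆ E(M) − (S ∪ T) be a set of elements each of which is non-flexible with respect to (S,T). Then there exist an ordering (f₁, f₂, …, f_t) of F and a sequence (A₁, A₂, …, A_t) of subsets of E(M) such that: (1) for each i ∈ {1,…,t}, S ⊆ A_i, T ⊆ E(M) − A_i, and λ_M(A_i) = k; (2) A_i ⊆ A_{i+1} for each i ∈ {1,…,t−1}; (3) A_i ∩ F = {f₁, …, f_i} for each i ∈ {1,…,t}; (4) for each i, either f_i ∈ cl_M(A_i − {f_i}) ∩ cl_M(E(M) − A_i), or f_i ∈ cl*_M(A_i − {f_i}) ∩ cl*_M(E(M) − A_i). -/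

import Mathlib

open Set Matroid

namespace Intertwine

variable {α : Type*}

/-- The (extended) rank of a set in a matroid: the supremum of the cardinalities of its
independent subsets. -/
noncomputable def eRk (M : Matroid α) (X : Set α) : ℕ∞ :=
  ⨆ I ∈ {I : Set α | M.Indep I ∧ I ⊆ X}, I.encard

/-- The connectivity function `λ_M(X) = r(X) + r(E \ X) - r(M)`. -/
noncomputable def lam (M : Matroid α) (X : Set α) : ℕ∞ :=
  eRk M X + eRk M (M.E \ X) - eRk M M.E

/-- The connectivity between `S` and `T`:
`κ_M(S,T) = min {λ_M(X) : S ⊆ X ⊆ E \ T}`. -/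
noncomputable def kap (M : Matroid α) (S T : Set α) : ℕ∞ :=
  ⨅ X ∈ {X : Set α | S ⊆ X ∧ X ⊆ M.E \ T}, lam M X

/-- Deletion of a set of elements. -/
def del (M : Matroid α) (D : Set α) : Matroid α := M ↾ (M.E \ D)

/-- Contraction of a set of elements, via duality: `M / C = (M* \ C)*`. -/
def con (M : Matroid α) (C : Set α) : Matroid α := (del M✶ C)✶

/-- `N` is a minor of `M` if `N = M / C \ D` for disjoint subsets `C, D` of `E(M)`. -/
def IsMinor (N M : Matroid α) : Prop :=
  ∃ C D : Set α, C ⊆ M.E ∧ D ⊆ M.E ∧ Disjoint C D ∧ N = del (con M C) D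

/-- `M` is representable over the field `𝔽` if its independent sets are exactly the
sets on which some vector-valued function is linearly independent. -/
def IsRepresentable (𝔽 : Type*) [Field 𝔽] (M : Matroid α) : Prop :=
  ∃ (B : Set α) (v : α → (B →₀ 𝔽)),
    ∀ I : Set α, M.Indep I ↔ I ⊆ M.E ∧ LinearIndependent 𝔽 (fun x : I ↦ v x)

end Intertwine

/-!
In finite rank, write `λ(X) = r(X) + r(E - X) - r(E)` and call a set `A` with `S ⊆ A ⊆ E - T`
tight if `λ(A) = k`. By submodularity tight sets are closed under `∩` and `∪`. If `e` is not
flexible, a set `X` of order `< k` in `M \ e` or `M / e` gives a tight set `A = X + e` for which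
`A - e` is tight too; comparing `λ(A)` with `λ(A - e)` puts `e` in the guts or the coguts of
`A`. Such witnesses for `e` survive intersection with tight sets containing `e` and union with
tight sets avoiding `e`. Hence, given a tight floor `G` avoiding the elements of `F` not yet
ordered, a witness containing `G` that meets `F` in as few elements as possible meets it in a
single element `f`: this is the next element of the ordering, and its witness the next floor.
In infinite rank `λ` is identically `0` (as `r(E) = ⊤` in `ℕ∞`), so every element is flexible
and `F = ∅`.
-/

namespace Matroid

variable {α : Type*} {M : Matroid α} {D X Y : Set α} {e : α}

/-- Takes the junk value `0` on sets of infinite rank. -/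
noncomputable def rk (M : Matroid α) (X : Set α) : ℕ := (M.eRk X).toNat

lemma cast_rk_eq [M.RankFinite] (X : Set α) : (M.rk X : ℕ∞) = M.eRk X :=
  ENat.natCast_toNat (eRk_ne_top_iff.2 (M.isRkFinite_set X))

lemma rk_mono [M.RankFinite] (h : X ⊆ Y) : M.rk X ≤ M.rk Y := by
  exact_mod_cast (cast_rk_eq (M := M) X).trans_le ((M.eRk_mono h).trans (cast_rk_eq Y).ge)

lemma rk_submod [M.RankFinite] (X Y : Set α) :
    M.rk (X ∩ Y) + M.rk (X ∪ Y) ≤ M.rk X + M.rk Y := by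
  have h := M.eRk_submod X Y
  simp only [← cast_rk_eq] at h
  exact_mod_cast h

lemma rk_insert_le_add_rk_singleton [M.RankFinite] (e : α) (X : Set α) :
    M.rk (insert e X) ≤ M.rk X + M.rk {e} := by
  have h := M.eRk_union_le_eRk_add_eRk X {e}
  rw [union_singleton] at h
  simp only [← cast_rk_eq] at h
  exact_mod_cast h

lemma rk_singleton_le [M.RankFinite] (e : α) : M.rk {e} ≤ 1 := by
  have h := M.eRk_singleton_le e
  rw [← cast_rk_eq] at h
  exact_mod_cast h

lemma rk_insert_le_add_one [M.RankFinite] (e : α) (X : Set α) :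
    M.rk (insert e X) ≤ M.rk X + 1 :=
  (rk_insert_le_add_rk_singleton e X).trans (Nat.add_le_add_left (rk_singleton_le e) _)

lemma rk_ground_le_rk_add_rk_compl [M.RankFinite] (X : Set α) :
    M.rk M.E ≤ M.rk X + M.rk (M.E \ X) := by
  have h := rk_submod (M := M) X (M.E \ X)
  rw [inter_sdiff_self, union_sdiff_self, show M.rk ∅ = 0 by simp [rk], zero_add] at h
  exact (rk_mono subset_union_right).trans h

lemma mem_closure_iff_rk_insert_eq [M.RankFinite] (he : e ∈ M.E) :
    e ∈ M.closure X ↔ M.rk (insert e X) = M.rk X := by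
  refine ⟨fun h ↦ ?_, fun h ↦ by_contra fun hcl ↦ ?_⟩
  · rw [rk, ← eRk_insert_closure_eq, insert_eq_of_mem h, eRk_closure_eq, rk]
  · have h' := eRk_insert_eq_add_one (M := M) ⟨he, hcl⟩
    simp only [← cast_rk_eq] at h'
    norm_cast at h'
    omega

lemma delete_eRk_eq (M : Matroid α) (hXD : Disjoint X D) : (M ＼ D).eRk X = M.eRk X := by
  rw [delete_eq_restrict, restrict_eRk_eq', ← M.eRk_inter_ground X]
  congr 1
  tauto_set

lemma delete_rk_eq (M : Matroid α) (hXD : Disjoint X D) : (M ＼ D).rk X = M.rk X := by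
  rw [rk, rk, delete_eRk_eq M hXD]

lemma contract_eRk_add_eRk (M : Matroid α) (C X : Set α) :
    (M ／ C).eRk X + M.eRk C = M.eRk (X ∪ C) := by
  obtain ⟨J, hJ⟩ := M.exists_isBasis' C
  obtain ⟨K, hK, hJK⟩ :=
    hJ.indep.subset_isBasis'_of_subset (hJ.subset.trans (subset_union_right (s := X)))
  have hKC : K ∩ C = J :=
    (hJ.eq_of_subset_indep (hK.indep.inter_right C) (subset_inter hJK hJ.subset)
      inter_subset_right).symm
  have hcon : (M ／ C).IsBasis' (K \ C) ((X ∪ C) \ C) :=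
    hK.contract_isBasis' hJ (by rw [← hKC, sdiff_union_inter]; exact hK.indep)
  have hXC : (M ／ C).eRk X = (M ／ C).eRk ((X ∪ C) \ C) := by
    rw [← eRk_inter_ground, ← eRk_inter_ground (X := (X ∪ C) \ C), contract_ground]
    congr 1
    tauto_set
  rw [hXC, ← hcon.encard_eq_eRk, ← hJ.encard_eq_eRk, ← hK.encard_eq_eRk, ← hKC,
    encard_sdiff_add_encard_inter]

lemma contract_rk_add_rk [M.RankFinite] (C X : Set α) :
    (M ／ C).rk X + M.rk C = M.rk (X ∪ C) := by
  have h := M.contract_eRk_add_eRk C X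
  simp only [← cast_rk_eq] at h
  exact_mod_cast h

lemma mem_dual_closure_of_notMem_closure (he : e ∈ M.E)
    (hecl : e ∉ M.closure (M.E \ insert e X)) : e ∈ M✶.closure X := by
  -- For a base `B` containing `e` and a basis of `E - (X + e)`, the cocircuit `E - cl(B - e)`
  -- contains `e` and lies in `X + e`.
  obtain ⟨I, hI⟩ := M.exists_isBasis (M.E \ insert e X)
  have heI : e ∉ I := fun h ↦ (hI.subset h).2 (mem_insert e X)
  have hIe : M.Indep (insert e I) :=
    (hI.indep.insert_indep_iff_of_notMem heI).2 ⟨he, by rwa [hI.closure_eq_closure]⟩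
  obtain ⟨B, hB, hIB⟩ := hIe.exists_isBase_superset
  have heB : e ∈ B := hIB (mem_insert e I)
  have hK := hB.compl_closure_sdiff_singleton_isCocircuit heB
  have heK : e ∈ M.E \ M.closure (B \ {e}) := ⟨he, hB.indep.notMem_closure_sdiff_of_mem heB⟩
  have hKX : (M.E \ M.closure (B \ {e})) \ {e} ⊆ X := by
    rintro x ⟨⟨hxE, hxcl⟩, hxe⟩
    by_contra hxX
    refine hxcl (M.closure_subset_closure (subset_sdiff_singleton
      ((subset_insert e I).trans hIB) heI) ?_)
    rw [hI.closure_eq_closure]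
    exact M.mem_closure_of_mem' ⟨hxE, by rintro (rfl | h); exacts [hxe rfl, hxX h]⟩
  exact M✶.closure_subset_closure hKX (hK.mem_closure_sdiff_singleton_of_mem heK)

end Matroid

lemma List.exists_fin_chain_of_pairwise {β : Type*} {F : Set β} (l : List (β × Set β))
    (hl : ∀ x, x ∈ l.map Prod.fst ↔ x ∈ F) (hmem : ∀ p ∈ l, p.1 ∈ p.2)
    (hpw : l.Pairwise fun p q ↦ p.2 ⊆ q.2 ∧ q.1 ∉ p.2) :
    ∃ (t : ℕ) (f : Fin t → β) (A : Fin t → Set β), (∀ i, (f i, A i) ∈ l) ∧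
      Function.Injective f ∧ Set.range f = F ∧ (∀ i j, i ≤ j → A i ⊆ A j) ∧
      ∀ i, A i ∩ F = f '' {j | j ≤ i} := by
  have hrel := List.pairwise_iff_get.1 hpw
  have hmono : ∀ i j, i ≤ j → (l.get i).2 ⊆ (l.get j).2 := fun i j hij ↦
    hij.eq_or_lt.elim (fun h ↦ h ▸ subset_rfl) fun h ↦ (hrel i j h).1
  have hrange : Set.range (fun i ↦ (l.get i).1) = F := by
    ext x
    rw [Set.mem_range, ← hl, List.mem_map]
    refine ⟨fun ⟨i, hi⟩ ↦ ⟨_, l.get_mem i, hi⟩, fun ⟨p, hp, hpx⟩ ↦ ?_⟩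
    obtain ⟨i, rfl⟩ := List.mem_iff_get.1 hp
    exact ⟨i, hpx⟩
  refine ⟨l.length, fun i ↦ (l.get i).1, fun i ↦ (l.get i).2, fun i ↦ l.get_mem i, ?_,
    hrange, hmono, fun i ↦ ?_⟩
  · intro i j (hij : (l.get i).1 = (l.get j).1)
    by_contra hne
    rcases lt_or_gt_of_ne hne with h | h
    · exact (hrel i j h).2 (by rw [← hij]; exact hmem _ (l.get_mem i))
    · exact (hrel j i h).2 (by rw [hij]; exact hmem _ (l.get_mem j))
  · ext x
    constructor
    · rintro ⟨hxA, hxF⟩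
      obtain ⟨j, rfl⟩ := hrange.symm ▸ hxF
      exact ⟨j, not_lt.1 fun h ↦ (hrel i j h).2 hxA, rfl⟩
    · rintro ⟨j, hji, rfl⟩
      exact ⟨hmono j i hji (hmem _ (l.get_mem j)), hrange ▸ Set.mem_range_self j⟩

namespace Intertwine

variable {α : Type*} {M : Matroid α} {S T A C G X : Set α} {k : ℕ} {e : α}

lemma eRk_eq_matroid_eRk (M : Matroid α) (X : Set α) : eRk M X = M.eRk X :=
  le_antisymm (iSup₂_le fun _ hI ↦ hI.1.encard_le_eRk_of_subset hI.2)
    (eRk_le_iff.2 fun I hIX hI ↦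
      le_iSup₂_of_le (f := fun I (_ : M.Indep I ∧ I ⊆ X) ↦ I.encard) I ⟨hI, hIX⟩ le_rfl)

lemma del_eq_delete (M : Matroid α) (D : Set α) : del M D = M ＼ D := rfl

lemma con_eq_contract (M : Matroid α) (C : Set α) : con M C = M ／ C := rfl

lemma lam_eq_rk [M.RankFinite] (X : Set α) :
    lam M X = ((M.rk X + M.rk (M.E \ X) - M.rk M.E : ℕ) : ℕ∞) := by
  simp only [lam, eRk_eq_matroid_eRk, ← cast_rk_eq]
  norm_cast

lemma lam_eq_zero [M.RankInfinite] (X : Set α) : lam M X = 0 := by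
  rw [lam, eRk_eq_matroid_eRk M M.E, eRk_ground, eRank_eq_top, ENat.sub_top]

lemma lam_delete_singleton [M.RankFinite] (heX : e ∉ X) :
    lam (M ＼ {e}) X = ((M.rk X + M.rk (M.E \ insert e X) - M.rk (M.E \ {e}) : ℕ) : ℕ∞) := by
  rw [lam_eq_rk, delete_ground, sdiff_sdiff, singleton_union,
    delete_rk_eq _ (disjoint_singleton_right.2 heX), delete_rk_eq _ (by simp),
    delete_rk_eq _ disjoint_sdiff_left]

lemma lam_contract_singleton [M.RankFinite] (he : e ∈ M.E) (heX : e ∉ X) :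
    lam (M ／ {e}) X =
      ((M.rk (insert e X) + M.rk (M.E \ X) - M.rk M.E - M.rk {e} : ℕ) : ℕ∞) := by
  have hX := M.contract_rk_add_rk {e} X
  have hcompl := M.contract_rk_add_rk {e} ((M.E \ {e}) \ X)
  have hground := M.contract_rk_add_rk {e} (M.E \ {e})
  rw [union_singleton] at hX hcompl hground
  rw [insert_sdiff_singleton, insert_eq_of_mem he] at hground
  rw [sdiff_sdiff_comm, insert_sdiff_singleton,
    insert_eq_of_mem (show e ∈ M.E \ X from ⟨he, heX⟩)] at hcompl
  rw [lam_eq_rk, contract_ground, sdiff_sdiff_comm]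
  congr 1
  omega

lemma kap_le_lam (hSX : S ⊆ X) (hXT : X ⊆ M.E \ T) : kap M S T ≤ lam M X :=
  iInf₂_le X ⟨hSX, hXT⟩

lemma exists_lam_eq_kap (hS : S ⊆ M.E \ T) :
    ∃ X, S ⊆ X ∧ X ⊆ M.E \ T ∧ lam M X = kap M S T := by
  have : Nonempty {X // S ⊆ X ∧ X ⊆ M.E \ T} := ⟨⟨S, subset_rfl, hS⟩⟩
  obtain ⟨⟨X, hX⟩, h⟩ :=
    ENat.exists_eq_iInf fun X : {X // S ⊆ X ∧ X ⊆ M.E \ T} ↦ lam M X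
  exact ⟨X, hX.1, hX.2, h.trans (by rw [kap, iInf_subtype']; rfl)⟩

lemma kap_ne_top [M.RankFinite] (hS : S ⊆ M.E \ T) : kap M S T ≠ ⊤ :=
  ne_top_of_le_ne_top (by rw [lam_eq_rk]; exact ENat.natCast_ne_top _) (kap_le_lam subset_rfl hS)

lemma kap_eq_zero [M.RankInfinite] (hS : S ⊆ M.E \ T) : kap M S T = 0 :=
  nonpos_iff_eq_zero.1 ((kap_le_lam subset_rfl hS).trans (lam_eq_zero S).le)

lemma rankInfinite_delete_singleton [M.RankInfinite] (e : α) : (M ＼ {e}).RankInfinite := by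
  have h := M.eRk_insert_le_add_one e (M.E \ {e})
  rw [insert_sdiff_singleton, eRk_eq_eRank (subset_insert _ _), eRank_eq_top, top_le_iff,
    ENat.add_eq_top, or_iff_left ENat.one_ne_top] at h
  rw [← eRank_eq_top_iff, eRank_def, delete_ground, delete_eRk_eq _ disjoint_sdiff_left, h]

lemma rankInfinite_contract_singleton [M.RankInfinite] (e : α) : (M ／ {e}).RankInfinite := by
  have h := M.contract_eRk_add_eRk {e} (M.E \ {e})
  rw [sdiff_union_self, eRk_eq_eRank subset_union_left, eRank_eq_top, ENat.add_eq_top,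
    or_iff_left (ne_top_of_le_ne_top ENat.one_ne_top (M.eRk_singleton_le e))] at h
  rw [← eRank_eq_top_iff, eRank_def, contract_ground, h]

lemma kap_delete_contract_eq_of_rankInfinite [M.RankInfinite] (hS : S ⊆ M.E \ T) (heS : e ∉ S) :
    kap (M ＼ {e}) S T = kap M S T ∧ kap (M ／ {e}) S T = kap M S T := by
  have hS' : S ⊆ (M.E \ {e}) \ T := sdiff_sdiff_comm ▸ subset_sdiff_singleton hS heS
  have := rankInfinite_delete_singleton (M := M) e
  have := rankInfinite_contract_singleton (M := M) e
  rw [kap_eq_zero hS, kap_eq_zero (M := M ＼ {e}) hS', kap_eq_zero (M := M ／ {e}) hS']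
  exact ⟨rfl, rfl⟩

/-! ### Tight sets and witnesses in finite rank -/

-- `λ_M(A) = k` and `k ≤ κ_M(S,T)`, in a form free of truncated subtraction.
structure IsTight (M : Matroid α) (S T : Set α) (k : ℕ) (A : Set α) : Prop where
  left_subset : S ⊆ A
  subset_sdiff_right : A ⊆ M.E \ T
  rk_add_rk_compl : M.rk A + M.rk (M.E \ A) = k + M.rk M.E

def ConnLowerBound (M : Matroid α) (S T : Set α) (k : ℕ) : Prop :=
  ∀ X, S ⊆ X → X ⊆ M.E \ T → k + M.rk M.E ≤ M.rk X + M.rk (M.E \ X)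

structure IsWitness (M : Matroid α) (S T : Set α) (k : ℕ) (e : α) (A : Set α) : Prop where
  mem : e ∈ A
  isTight : IsTight M S T k A
  isTight_sdiff : IsTight M S T k (A \ {e})

lemma IsTight.subset_ground (hA : IsTight M S T k A) : A ⊆ M.E :=
  hA.subset_sdiff_right.trans sdiff_subset

lemma IsTight.lam_eq [M.RankFinite] (hA : IsTight M S T k A) : lam M A = k := by
  rw [lam_eq_rk, hA.rk_add_rk_compl, Nat.add_sub_cancel]

lemma connLowerBound_of_kap_eq [M.RankFinite] (h : kap M S T = k) : ConnLowerBound M S T k := by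
  intro X hSX hXT
  have hle := kap_le_lam hSX hXT
  rw [h, lam_eq_rk, Nat.cast_le] at hle
  have := M.rk_ground_le_rk_add_rk_compl X
  omega

lemma exists_isTight_of_kap_eq [M.RankFinite] (h : kap M S T = k) (hS : S ⊆ M.E \ T) :
    ∃ A, IsTight M S T k A := by
  obtain ⟨A, hSA, hAT, hA⟩ := exists_lam_eq_kap hS
  rw [h, lam_eq_rk, Nat.cast_inj] at hA
  have := M.rk_ground_le_rk_add_rk_compl A
  exact ⟨A, hSA, hAT, by omega⟩

lemma IsTight.uncross [M.RankFinite] (hk : ConnLowerBound M S T k) (hA : IsTight M S T k A)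
    (hC : IsTight M S T k C) : IsTight M S T k (A ∩ C) ∧ IsTight M S T k (A ∪ C) := by
  obtain ⟨hSA, hAT, hA⟩ := hA
  obtain ⟨hSC, hCT, hC⟩ := hC
  have hsub := M.rk_submod A C
  have hsub' := M.rk_submod (M.E \ A) (M.E \ C)
  rw [sdiff_inter_sdiff, ← sdiff_inter] at hsub'
  have hinter := hk (A ∩ C) (subset_inter hSA hSC) (inter_subset_left.trans hAT)
  have hunion := hk (A ∪ C) (hSA.trans subset_union_left) (union_subset hAT hCT)
  exact ⟨⟨subset_inter hSA hSC, inter_subset_left.trans hAT, by omega⟩,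
    ⟨hSA.trans subset_union_left, union_subset hAT hCT, by omega⟩⟩

lemma IsWitness.inter_isTight [M.RankFinite] (hk : ConnLowerBound M S T k)
    (hA : IsWitness M S T k e A) (hC : IsTight M S T k C) (heC : e ∈ C) :
    IsWitness M S T k e (A ∩ C) :=
  ⟨⟨hA.mem, heC⟩, (hA.isTight.uncross hk hC).1,
    by rw [inter_sdiff_right_comm]; exact (hA.isTight_sdiff.uncross hk hC).1⟩

lemma IsWitness.union_isTight [M.RankFinite] (hk : ConnLowerBound M S T k)
    (hA : IsWitness M S T k e A) (hC : IsTight M S T k C) (heC : e ∉ C) :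
    IsWitness M S T k e (A ∪ C) :=
  ⟨.inl hA.mem, (hA.isTight.uncross hk hC).2, by
    rw [union_sdiff_distrib, sdiff_singleton_eq_self heC]
    exact (hA.isTight_sdiff.uncross hk hC).2⟩

lemma IsWitness.guts_or_coguts [M.RankFinite] (hA : IsWitness M S T k e A) :
    (e ∈ M.closure (A \ {e}) ∧ e ∈ M.closure (M.E \ A)) ∨
      (e ∉ M.closure (A \ {e}) ∧ e ∉ M.closure (M.E \ A)) := by
  obtain ⟨heA, hA, hAe⟩ := hA
  have heE := hA.subset_ground heA
  have hins : insert e (A \ {e}) = A := by rw [insert_sdiff_singleton, insert_eq_of_mem heA]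
  have hcompl : M.E \ (A \ {e}) = insert e (M.E \ A) := by
    ext x; by_cases hx : x = e <;> simp_all
  have hA' := hA.rk_add_rk_compl
  have hAe' := hAe.rk_add_rk_compl
  have hle := M.rk_insert_le_add_one e (A \ {e})
  have hle' := M.rk_insert_le_add_one e (M.E \ A)
  have hmono := M.rk_mono (subset_insert e (A \ {e}))
  have hmono' := M.rk_mono (subset_insert e (M.E \ A))
  rw [hcompl] at hAe'
  rw [hins] at hle hmono
  rw [mem_closure_iff_rk_insert_eq heE, mem_closure_iff_rk_insert_eq heE, hins]
  omega

lemma IsWitness.mem_closure_or_mem_dual_closure [M.RankFinite] (hA : IsWitness M S T k e A) :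
    e ∈ M.closure (A \ {e}) ∩ M.closure (M.E \ A) ∨
      e ∈ M✶.closure (A \ {e}) ∩ M✶.closure (M.E \ A) := by
  have hAE := hA.isTight.subset_ground
  have heE := hAE hA.mem
  refine hA.guts_or_coguts.imp id fun ⟨hcl, hcl'⟩ ↦
    ⟨mem_dual_closure_of_notMem_closure heE ?_, mem_dual_closure_of_notMem_closure heE ?_⟩
  · rwa [insert_sdiff_singleton, insert_eq_of_mem hA.mem]
  · rwa [show M.E \ insert e (M.E \ A) = A \ {e} by rw [insert_eq]; tauto_set]

/-! ### Witnesses for non-flexible elements -/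

lemma IsTight.kap_delete_le [M.RankFinite] (hA : IsTight M S T k A) (heS : e ∉ S) :
    kap (M ＼ {e}) S T ≤ k := by
  have hAT := hA.subset_sdiff_right
  have hAE := hA.subset_ground
  refine (kap_le_lam (X := A \ {e}) (subset_sdiff_singleton hA.left_subset heS)
    (by rw [delete_ground]; tauto_set)).trans ?_
  rw [lam_delete_singleton (by simp), Nat.cast_le, insert_sdiff_singleton]
  have hA' := hA.rk_add_rk_compl
  by_cases heA : e ∈ A
  · have hsub := M.rk_submod A (M.E \ {e})
    have hmono := M.rk_mono (show M.E ⊆ A ∪ (M.E \ {e}) by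
      intro x hx; by_cases hxe : x = e <;> simp_all)
    rw [show A ∩ (M.E \ {e}) = A \ {e} by tauto_set] at hsub
    rw [insert_eq_of_mem heA]
    omega
  · have hsub := M.rk_submod (M.E \ A) (M.E \ {e})
    have hmono := M.rk_mono (show M.E ⊆ (M.E \ A) ∪ (M.E \ {e}) by
      intro x hx; by_cases hxe : x = e <;> simp_all)
    rw [sdiff_inter_sdiff, union_singleton] at hsub
    rw [sdiff_singleton_eq_self heA]
    omega

lemma IsTight.kap_contract_le [M.RankFinite] (hA : IsTight M S T k A) (he : e ∈ M.E)
    (heS : e ∉ S) : kap (M ／ {e}) S T ≤ k := by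
  have hAT := hA.subset_sdiff_right
  refine (kap_le_lam (X := A \ {e}) (subset_sdiff_singleton hA.left_subset heS)
    (by rw [contract_ground]; tauto_set)).trans ?_
  rw [lam_contract_singleton he (by simp), Nat.cast_le, insert_sdiff_singleton]
  have hA' := hA.rk_add_rk_compl
  by_cases heA : e ∈ A
  · have hle := M.rk_insert_le_add_rk_singleton e (M.E \ A)
    rw [insert_eq_of_mem heA, show M.E \ (A \ {e}) = insert e (M.E \ A) by
      ext x; by_cases hx : x = e <;> simp_all]
    omega
  · have hle := M.rk_insert_le_add_rk_singleton e A
    rw [sdiff_singleton_eq_self heA]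
    omega

lemma ConnLowerBound.isWitness_of_lam_delete_lt [M.RankFinite] (hk : ConnLowerBound M S T k)
    (heT : e ∈ M.E \ T) (hSX : S ⊆ X) (hXT : X ⊆ (M ＼ {e}).E \ T)
    (hlt : lam (M ＼ {e}) X < k) : IsWitness M S T k e (insert e X) := by
  rw [delete_ground] at hXT
  have heX : e ∉ X := fun h ↦ (hXT h).1.2 rfl
  have hXT' : X ⊆ M.E \ T := hXT.trans (sdiff_subset_sdiff_left sdiff_subset)
  have hcompl : M.E \ X = insert e (M.E \ insert e X) := by
    ext x; by_cases hx : x = e <;> simp_all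
  rw [lam_delete_singleton heX, Nat.cast_lt] at hlt
  have hX := hk X hSX hXT'
  have hXe := hk _ (hSX.trans (subset_insert e X)) (insert_subset heT hXT')
  have hle := M.rk_insert_le_add_one e X
  have hle' := M.rk_insert_le_add_one e (M.E \ insert e X)
  have hmono := M.rk_mono (sdiff_subset : M.E \ {e} ⊆ M.E)
  rw [hcompl] at hX
  refine ⟨mem_insert e X,
    ⟨hSX.trans (subset_insert e X), insert_subset heT hXT', by omega⟩, ?_⟩
  rw [insert_sdiff_self_of_notMem heX]
  exact ⟨hSX, hXT', by rw [hcompl]; omega⟩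

lemma ConnLowerBound.isWitness_of_lam_contract_lt [M.RankFinite] (hk : ConnLowerBound M S T k)
    (heT : e ∈ M.E \ T) (hSX : S ⊆ X) (hXT : X ⊆ (M ／ {e}).E \ T)
    (hlt : lam (M ／ {e}) X < k) : IsWitness M S T k e (insert e X) := by
  rw [contract_ground] at hXT
  have heX : e ∉ X := fun h ↦ (hXT h).1.2 rfl
  have hXT' : X ⊆ M.E \ T := hXT.trans (sdiff_subset_sdiff_left sdiff_subset)
  have hcompl : M.E \ X = insert e (M.E \ insert e X) := by
    ext x; by_cases hx : x = e <;> simp_all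
  rw [lam_contract_singleton heT.1 heX, Nat.cast_lt] at hlt
  have hX := hk X hSX hXT'
  have hXe := hk _ (hSX.trans (subset_insert e X)) (insert_subset heT hXT')
  have hle := M.rk_singleton_le e
  have hmono := M.rk_mono (subset_insert e X)
  have hmono' := M.rk_mono (subset_insert e (M.E \ insert e X))
  rw [hcompl] at hX hlt
  refine ⟨mem_insert e X,
    ⟨hSX.trans (subset_insert e X), insert_subset heT hXT', by omega⟩, ?_⟩
  rw [insert_sdiff_self_of_notMem heX]
  exact ⟨hSX, hXT', by rw [hcompl]; omega⟩

lemma exists_isWitness [M.RankFinite] (hkap : kap M S T = k) (hS : S ⊆ M.E \ T)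
    (he : e ∈ M.E \ (S ∪ T)) (hnf : ¬ (kap (M ＼ {e}) S T = k ∧ kap (M ／ {e}) S T = k)) :
    ∃ A, IsWitness M S T k e A := by
  have heS : e ∉ S := fun h ↦ he.2 (.inl h)
  have heT : e ∈ M.E \ T := ⟨he.1, fun h ↦ he.2 (.inr h)⟩
  have hk := connLowerBound_of_kap_eq hkap
  obtain ⟨A, hA⟩ := exists_isTight_of_kap_eq hkap hS
  have hS' : S ⊆ (M.E \ {e}) \ T := sdiff_sdiff_comm ▸ subset_sdiff_singleton hS heS
  rcases not_and_or.1 hnf with hne | hne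
  · obtain ⟨X, hSX, hXT, hX⟩ := exists_lam_eq_kap (M := M ＼ {e}) hS'
    exact ⟨_, hk.isWitness_of_lam_delete_lt heT hSX hXT
      (hX ▸ (hA.kap_delete_le heS).lt_of_ne hne)⟩
  · obtain ⟨X, hSX, hXT, hX⟩ := exists_lam_eq_kap (M := M ／ {e}) hS'
    exact ⟨_, hk.isWitness_of_lam_contract_lt heT hSX hXT
      (hX ▸ (hA.kap_contract_le he.1 heS).lt_of_ne hne)⟩

/-! ### The nested chain of witnesses -/

lemma exists_isTight_disjoint [M.RankFinite] (hk : ConnLowerBound M S T k)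
    (hA : IsTight M S T k A) (F : Finset α) (hw : ∀ f ∈ F, ∃ B, IsWitness M S T k f B) :
    ∃ G, IsTight M S T k G ∧ Disjoint G F := by
  classical
  induction F using Finset.induction_on with
  | empty => exact ⟨A, hA, by simp⟩
  | insert f F hfF ih =>
    obtain ⟨G, hG, hGF⟩ := ih fun g hg ↦ hw g (Finset.mem_insert_of_mem hg)
    obtain ⟨B, hB⟩ := hw f (Finset.mem_insert_self f F)
    refine ⟨G ∩ (B \ {f}), (hG.uncross hk hB.isTight_sdiff).1, ?_⟩
    rw [Finset.coe_insert, disjoint_insert_right]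
    exact ⟨fun h ↦ h.2.2 rfl, hGF.mono_left inter_subset_left⟩

lemma exists_isWitness_inter_eq_singleton [M.RankFinite] (hk : ConnLowerBound M S T k)
    (hG : IsTight M S T k G) {F : Set α} (hF : F.Finite) (hGF : Disjoint G F)
    (hw : ∀ f ∈ F, ∃ B, IsWitness M S T k f B) (hne : F.Nonempty) :
    ∃ f ∈ F, ∃ A, IsWitness M S T k f A ∧ G ⊆ A ∧ A ∩ F = {f} := by
  classical
  have hP : ∃ n, ∃ f ∈ F, ∃ A,
      IsWitness M S T k f A ∧ G ⊆ A ∧ (A ∩ F).ncard = n := by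
    obtain ⟨f, hf⟩ := hne
    obtain ⟨B, hB⟩ := hw f hf
    exact ⟨_, f, hf, B ∪ G, hB.union_isTight hk hG (disjoint_right.1 hGF hf),
      subset_union_right, rfl⟩
  obtain ⟨f, hf, A, hA, hGA, hcard⟩ := Nat.find_spec hP
  refine ⟨f, hf, A, hA, hGA, ?_⟩
  by_contra hAF
  obtain ⟨g, ⟨hgA, hgF⟩, hgf⟩ : ∃ g ∈ A ∩ F, g ≠ f := by
    by_contra! h
    exact hAF (subset_antisymm h (singleton_subset_iff.2 ⟨hA.mem, hf⟩))
  obtain ⟨B, hB⟩ := hw g hgF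
  have hW := (hB.union_isTight hk hG (disjoint_right.1 hGF hgF)).inter_isTight hk
    hA.isTight_sdiff ⟨hgA, hgf⟩
  have hGW : G ⊆ (B ∪ G) ∩ (A \ {f}) :=
    subset_inter subset_union_right (subset_sdiff_singleton hGA (disjoint_right.1 hGF hf))
  have hlt : ((B ∪ G) ∩ (A \ {f}) ∩ F).ncard < (A ∩ F).ncard :=
    ncard_lt_ncard ⟨inter_subset_inter_left F (inter_subset_right.trans sdiff_subset),
      fun h ↦ (h ⟨hA.mem, hf⟩).1.2.2 rfl⟩ (hF.inter_of_right A)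
  exact Nat.find_min hP (hcard ▸ hlt) ⟨g, hgF, _, hW, hGW, rfl⟩

lemma exists_witness_chain [M.RankFinite] (hk : ConnLowerBound M S T k) (F : Finset α) :
    ∀ G, IsTight M S T k G → Disjoint G F → (∀ f ∈ F, ∃ B, IsWitness M S T k f B) →
    ∃ l : List (α × Set α), (∀ x, x ∈ l.map Prod.fst ↔ x ∈ F) ∧
      (∀ p ∈ l, IsWitness M S T k p.1 p.2 ∧ G ⊆ p.2) ∧
      l.Pairwise (fun p q ↦ p.2 ⊆ q.2 ∧ q.1 ∉ p.2) := by
  classical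
  induction F using Finset.strongInduction with
  | H F ih =>
  intro G hG hGF hw
  rcases F.eq_empty_or_nonempty with rfl | hne
  · exact ⟨[], by simp, by simp, .nil⟩
  obtain ⟨f, hf, A, hA, hGA, hAF⟩ :=
    exists_isWitness_inter_eq_singleton hk hG F.finite_toSet hGF hw hne
  have hAF' : Disjoint A ↑(F.erase f) := by
    rw [Finset.coe_erase, disjoint_iff_inter_eq_empty, ← inter_sdiff_assoc, hAF, sdiff_self]
  obtain ⟨l, hl, hlA, hpw⟩ := ih (F.erase f) (Finset.erase_ssubset hf) A hA.isTight hAF'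
    fun g hg ↦ hw g (Finset.mem_of_mem_erase hg)
  refine ⟨(f, A) :: l, fun x ↦ ?_, ?_,
    List.pairwise_cons.2 ⟨fun q hq ↦ ⟨(hlA q hq).2, ?_⟩, hpw⟩⟩
  · by_cases hx : x = f <;> simp [hl, hx, Finset.mem_coe.1 hf]
  · exact List.forall_mem_cons.2
      ⟨⟨hA, hGA⟩, fun p hp ↦ ⟨(hlA p hp).1, hGA.trans (hlA p hp).2⟩⟩
  · have hq : q.1 ∈ F.erase f := (hl q.1).1 (List.mem_map_of_mem hq)
    intro hqA
    have hqAF : q.1 ∈ A ∩ F := ⟨hqA, Finset.mem_of_mem_erase hq⟩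
    rw [hAF] at hqAF
    exact Finset.ne_of_mem_erase hq hqAF

theorem exists_nested_witnesses [M.RankFinite] (hkap : kap M S T = k) (hS : S ⊆ M.E \ T)
    {F : Set α} (hF : F.Finite) (hw : ∀ f ∈ F, ∃ A, IsWitness M S T k f A) :
    ∃ (t : ℕ) (f : Fin t → α) (A : Fin t → Set α),
      Function.Injective f ∧ Set.range f = F ∧ (∀ i, IsWitness M S T k (f i) (A i)) ∧
      (∀ i j, i ≤ j → A i ⊆ A j) ∧ ∀ i, A i ∩ F = f '' {j | j ≤ i} := by
  have hk := connLowerBound_of_kap_eq hkap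
  obtain ⟨A₀, hA₀⟩ := exists_isTight_of_kap_eq hkap hS
  lift F to Finset α using hF
  obtain ⟨G, hG, hGF⟩ := exists_isTight_disjoint hk hA₀ F hw
  obtain ⟨l, hl, hlw, hpw⟩ := exists_witness_chain hk F G hG hGF hw
  obtain ⟨t, f, A, hfA, hinj, hrange, hmono, htrace⟩ :=
    l.exists_fin_chain_of_pairwise hl (fun p hp ↦ (hlw p hp).1.mem) hpw
  exact ⟨t, f, A, hinj, hrange, fun i ↦ (hlw _ (hfA i)).1, hmono, htrace⟩

end Intertwine

open Intertwine in
/-- Theorem 8: if `F` is a finite set of elements, none of which is flexible with respect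
to `(S,T)`, then `F` admits an ordering `f₁, …, f_t` together with a nested sequence
`A₁ ⊆ ⋯ ⊆ A_t` of `S−T`-separating sets of order `k+1` such that `A_i ∩ F = {f₁, …, f_i}`
and each `f_i` lies in `cl(A_i \ {f_i}) ∩ cl(E \ A_i)` or in the analogous dual closures. -/
theorem nested_seps_for_nonflexible {α : Type*} (M : Matroid α)
    (S T : Set α) (hS : S ⊆ M.E) (hT : T ⊆ M.E) (hST : Disjoint S T)
    (k : ℕ∞) (hk : kap M S T = k)
    (F : Set α) (hF : F ⊆ M.E \ (S ∪ T)) (hFfin : F.Finite)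
    (hnonflex : ∀ e ∈ F, ¬ (kap (del M {e}) S T = k ∧ kap (con M {e}) S T = k)) :
    ∃ (t : ℕ) (f : Fin t → α) (A : Fin t → Set α),
      Function.Injective f ∧ Set.range f = F ∧
      (∀ i, A i ⊆ M.E ∧ S ⊆ A i ∧ T ⊆ M.E \ A i ∧ lam M (A i) = k) ∧
      (∀ i j : Fin t, i ≤ j → A i ⊆ A j) ∧
      (∀ i, A i ∩ F = f '' {j : Fin t | j ≤ i}) ∧
      (∀ i, f i ∈ M.closure (A i \ {f i}) ∩ M.closure (M.E \ A i) ∨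
            f i ∈ M✶.closure (A i \ {f i}) ∩ M✶.closure (M.E \ A i)) := by
  simp only [del_eq_delete, con_eq_contract] at hnonflex
  have hST' : S ⊆ M.E \ T := subset_sdiff.2 ⟨hS, hST⟩
  rcases M.rankFinite_or_rankInfinite with hM | hM
  · obtain ⟨n, rfl⟩ := ENat.ne_top_iff_exists.1 (hk ▸ kap_ne_top hST')
    obtain ⟨t, f, A, hinj, hrange, hA, hmono, htrace⟩ := exists_nested_witnesses hk hST' hFfin
      fun e he ↦ exists_isWitness hk hST' (hF he) (hnonflex e he)
    refine ⟨t, f, A, hinj, hrange, fun i ↦ ?_, hmono, htrace,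
      fun i ↦ (hA i).mem_closure_or_mem_dual_closure⟩
    have hAi := (hA i).isTight
    exact ⟨hAi.subset_ground, hAi.left_subset,
      subset_sdiff.2 ⟨hT, (subset_sdiff.1 hAi.subset_sdiff_right).2.symm⟩, hAi.lam_eq⟩
  · obtain rfl : F = ∅ := eq_empty_of_forall_notMem fun e he ↦ hnonflex e he
      (hk ▸ kap_delete_contract_eq_of_rankInfinite hST' fun h ↦ (hF he).2 (.inl h))
    exact ⟨0, Fin.elim0, Fin.elim0, fun i ↦ i.elim0, by simp, fun i ↦ i.elim0,
      fun i ↦ i.elim0, fun i ↦ i.elim0, fun i ↦ i.elim0⟩
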